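/- arXiv:2203.00775 — 3 statements merged into one kernel-verified Lean document; each statement's English description precedes it below -/
import Mathlib

section
/- Let f ∈ F_{μ,L}(ℝ^d) with L > 0, μ ≤ 0, κ = μ/L, bounded below by f_*. Run N gradient steps x_{i+1} = x_i - (h_i/L)∇f(x_i) with all h_i ∈ (0, h̄(κ)]. Define p(h,κ) = 2h - h²(-κ)/(1-κ) for h ∈ (0,1] and p(h,κ) = h(2-h)(2-κh)/(2-(1+κ)h) for h ∈ [1, h̄(κ)]. Then min_{0 ≤ i ≤ N} ‖∇f(x_i)‖² ≤ 2L(f(x₀) - f_*) / (1 + ∑_{i=0}^{N-1} p(h_i, κ)). -/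
/-!
For `f ∈ F_{μ,L}` the two-point interpolation inequality
`‖∇f v - ∇f u - μ (v - u)‖² ≤ 2 (L - μ) (f v - f u - ⟪∇f u, v - u⟫ - μ/2 ‖v - u‖²)`
follows from the two convexity hypotheses, compared at the point
`v - (∇f v - ∇f u - μ (v - u))/(L - μ)`.
Applied in both directions to consecutive iterates, it yields
`p(h, κ) · min (‖∇f xᵢ‖², ‖∇f xᵢ₊₁‖²) ≤ 2L (f xᵢ - f xᵢ₊₁)` whenever `0 < h ≤ h̄(κ)`, a purely
scalar consequence: a combination of the two inequalities whose weights are nonnegative because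
`h ≤ h̄(κ)` forces `κh² - 2(1 + κ)h + 3 ≥ 0`. Summing telescopes, and the last gradient is
controlled by the descent lemma at `x_N - ∇f(x_N)/L`, which gives `‖∇f x_N‖² ≤ 2L (f x_N - f_*)`.
-/

noncomputable def hbar (κ : ℝ) : ℝ := 3 / (1 + κ + Real.sqrt (1 - κ + κ ^ 2))

noncomputable def pcoef (h κ : ℝ) : ℝ :=
  if h ≤ 1 then 2 * h - h ^ 2 * (-κ) / (1 - κ)
  else h * (2 - h) * (2 - κ * h) / (2 - (1 + κ) * h)

open scoped InnerProductSpace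

-- `hbar κ` is the positive root of `κh² - 2(1 + κ)h + 3`.
theorem quadratic_nonneg_of_le_hbar {κ h : ℝ} (hκ : κ ≤ 0) (h0 : 0 < h) (hh : h ≤ hbar κ) :
    0 ≤ κ * h ^ 2 - 2 * (1 + κ) * h + 3 := by
  set r := Real.sqrt (1 - κ + κ ^ 2)
  have hr0 : 0 ≤ r := Real.sqrt_nonneg _
  have hr2 : r ^ 2 = 1 - κ + κ ^ 2 := Real.sq_sqrt (by nlinarith)
  have hden : 0 < 1 + κ + r := by nlinarith
  have hhr : h * (1 + κ + r) ≤ 3 := (le_div_iff₀ hden).mp hh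
  nlinarith [mul_nonneg (neg_nonneg.2 hκ) (sub_nonneg.2 hhr)]

theorem two_sub_mul_pos_of_quadratic_nonneg {κ h : ℝ} (hκ : κ ≤ 0)
    (hT : 0 ≤ κ * h ^ 2 - 2 * (1 + κ) * h + 3) : 0 < 2 - (1 + κ) * h := by
  nlinarith [mul_nonneg (neg_nonneg.2 hκ) (sq_nonneg h)]

theorem le_two_of_quadratic_nonneg {κ h : ℝ} (hκ : κ ≤ 0) (h0 : 0 < h)
    (hT : 0 ≤ κ * h ^ 2 - 2 * (1 + κ) * h + 3) : h ≤ 2 := by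
  by_contra! hc
  nlinarith [mul_nonneg (neg_nonneg.2 hκ) (mul_nonneg h0.le (sub_nonneg.2 hc.le))]

theorem pcoef_nonneg {κ h : ℝ} (hκ : κ ≤ 0) (h0 : 0 < h) (hh : h ≤ hbar κ) :
    0 ≤ pcoef h κ := by
  have hT := quadratic_nonneg_of_le_hbar hκ h0 hh
  unfold pcoef
  split_ifs with h1
  · rw [sub_nonneg, div_le_iff₀ (by linarith)]
    nlinarith [mul_nonneg (neg_nonneg.2 hκ) (sub_nonneg.2 h1)]
  · have h2 := le_two_of_quadratic_nonneg hκ h0 hT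
    have hq := two_sub_mul_pos_of_quadratic_nonneg hκ hT
    exact div_nonneg (mul_nonneg (mul_nonneg h0.le (by linarith)) (by nlinarith)) hq.le

/- With `v = u - (h / L) ∇f u`, `a = ‖∇f u‖²`, `b = ‖∇f v‖²`, `s = ⟪∇f v, ∇f u⟫` and
`D = 2L (f u - f v)`, `hvu` and `huv` are the interpolation inequalities based at `v` and at `u`,
written in these variables. For `h ≤ 1` the first one suffices; for `h > 1` they are combined
with weights `1 - κh` and `h - 1`. -/
theorem pcoef_mul_min_le {κ h a b s D : ℝ} (hκ : κ ≤ 0) (h0 : 0 < h)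
    (hT : 0 ≤ κ * h ^ 2 - 2 * (1 + κ) * h + 3) (hs : 2 * s ≤ a + b)
    (hvu : b - 2 * (1 - κ * h) * s + (1 - κ * h) ^ 2 * a
      ≤ (1 - κ) * (D - 2 * h * s - κ * h ^ 2 * a))
    (huv : b - 2 * (1 - κ * h) * s + (1 - κ * h) ^ 2 * a
      ≤ (1 - κ) * (2 * h * a - κ * h ^ 2 * a - D)) :
    pcoef h κ * min a b ≤ D := by
  have hκ1 : 0 < 1 - κ := by linarith
  unfold pcoef
  split_ifs with h1
  · have hp : 2 * h - h ^ 2 * (-κ) / (1 - κ) = (2 * h * (1 - κ) + κ * h ^ 2) / (1 - κ) := by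
      field_simp; ring
    rw [hp, div_mul_eq_mul_div, div_le_iff₀ hκ1]
    rcases le_total a b with hab | hba
    · rw [min_eq_left hab]
      linarith [mul_nonneg (sub_nonneg.2 h1) (by linarith : (0:ℝ) ≤ a + b - 2 * s),
                mul_nonneg h0.le (sub_nonneg.2 hab)]
    · rw [min_eq_right hba]
      have h1' : 0 ≤ 1 + κ * h - 2 * κ := by
        nlinarith [mul_nonneg (neg_nonneg.2 hκ) (sub_nonneg.2 h1)]
      linarith [mul_nonneg (sub_nonneg.2 h1) (by linarith : (0:ℝ) ≤ a + b - 2 * s),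
                mul_nonneg (mul_nonneg h0.le h1') (sub_nonneg.2 hba)]
  · have hq := two_sub_mul_pos_of_quadratic_nonneg hκ hT
    have hkh : 0 ≤ 1 - κ * h := by nlinarith
    rw [div_mul_eq_mul_div, div_le_iff₀ hq, ← mul_le_mul_iff_right₀ hκ1]
    rcases le_total a b with hab | hba
    · rw [min_eq_left hab]
      linarith [mul_nonneg hkh (sub_nonneg.2 hvu),
                mul_nonneg (by linarith : (0:ℝ) ≤ h - 1) (sub_nonneg.2 huv),
                mul_nonneg (mul_nonneg h0.le hκ1.le) (sub_nonneg.2 hab)]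
    · rw [min_eq_right hba]
      linarith [mul_nonneg hkh (sub_nonneg.2 hvu),
                mul_nonneg (by linarith : (0:ℝ) ≤ h - 1) (sub_nonneg.2 huv),
                mul_nonneg (mul_nonneg (mul_nonneg h0.le hT) hκ1.le) (sub_nonneg.2 hba)]

theorem ConvexOn.add_fderiv_sub_le {E : Type*} [NormedAddCommGroup E] [NormedSpace ℝ E]
    {s : Set E} {φ : E → ℝ} {φ' : E →L[ℝ] ℝ} {u v : E}
    (hφ : ConvexOn ℝ s φ) (hu : u ∈ s) (hv : v ∈ s) (hφ' : HasFDerivAt φ φ' u) :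
    φ u + φ' (v - u) ≤ φ v := by
  have hline := hφ.comp_affineMap (AffineMap.lineMap (k := ℝ) u v)
  have hderiv : HasDerivAt (φ ∘ AffineMap.lineMap (k := ℝ) u v) (φ' (v - u)) 0 :=
    (by simpa using hφ' : HasFDerivAt φ φ' (AffineMap.lineMap u v (0 : ℝ))).comp_hasDerivAt _
      AffineMap.hasDerivAt_lineMap
  have := hline.le_slope_of_hasDerivAt (by simpa) (by simpa) one_pos hderiv
  simp only [slope_def_field, Function.comp_apply, AffineMap.lineMap_apply_one,
    AffineMap.lineMap_apply_zero, sub_zero, div_one] at this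
  linarith

section Gradient

variable {E : Type*} [NormedAddCommGroup E] [InnerProductSpace ℝ E] [CompleteSpace E]
  {f : E → ℝ} {g u : E} {c : ℝ}

theorem add_inner_add_sq_le_of_convexOn_sub_sq (hf : HasGradientAt f g u)
    (hconv : ConvexOn ℝ Set.univ (fun y => f y - c / 2 * ‖y‖ ^ 2)) (v : E) :
    f u + ⟪g, v - u⟫_ℝ + c / 2 * ‖v - u‖ ^ 2 ≤ f v := by
  have hφ' := (hasGradientAt_iff_hasFDerivAt.mp hf).sub
    ((hasStrictFDerivAt_norm_sq u).hasFDerivAt.const_mul (c / 2))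
  have h := hconv.add_fderiv_sub_le (Set.mem_univ u) (Set.mem_univ v) hφ'
  have hsq : ‖v‖ ^ 2 = ‖u‖ ^ 2 + 2 * ⟪u, v - u⟫_ℝ + ‖v - u‖ ^ 2 := by
    rw [← norm_add_sq_real, add_sub_cancel]
  simp only [sub_apply, InnerProductSpace.toDual_apply_apply,
    smul_apply, innerSL_apply_apply, nsmul_eq_mul, Nat.cast_ofNat,
    smul_eq_mul] at h
  rw [hsq] at h
  linarith

theorem le_add_inner_add_sq_of_convexOn_sq_sub (hf : HasGradientAt f g u)
    (hconv : ConvexOn ℝ Set.univ (fun y => c / 2 * ‖y‖ ^ 2 - f y)) (v : E) :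
    f v ≤ f u + ⟪g, v - u⟫_ℝ + c / 2 * ‖v - u‖ ^ 2 := by
  have hneg : HasGradientAt (-f) (-g) u := by
    simpa [hasGradientAt_iff_hasFDerivAt] using (hasGradientAt_iff_hasFDerivAt.mp hf).neg
  have h := add_inner_add_sq_le_of_convexOn_sub_sq (c := -c) hneg
    (by convert hconv using 2; simp only [Pi.neg_apply]; ring) v
  rw [Pi.neg_apply, Pi.neg_apply, inner_neg_left] at h
  linarith

variable {L μ : ℝ}

theorem sq_norm_gradient_sub_sub_smul_le (hdiff : Differentiable ℝ f)
    (hupper : ConvexOn ℝ Set.univ (fun y => L / 2 * ‖y‖ ^ 2 - f y))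
    (hlower : ConvexOn ℝ Set.univ (fun y => f y - μ / 2 * ‖y‖ ^ 2)) (hμL : μ < L) (u v : E) :
    ‖gradient f v - gradient f u - μ • (v - u)‖ ^ 2
      ≤ 2 * (L - μ) * (f v - f u - ⟪gradient f u, v - u⟫_ℝ - μ / 2 * ‖v - u‖ ^ 2) := by
  have hM : 0 < L - μ := sub_pos.2 hμL
  set q := (L - μ)⁻¹ • (gradient f v - gradient f u - μ • (v - u))
  have hΔ : gradient f v - gradient f u - μ • (v - u) = (L - μ) • q :=
    (smul_inv_smul₀ hM.ne' _).symm
  have h1 := add_inner_add_sq_le_of_convexOn_sub_sq (hdiff u).hasGradientAt hlower (v - q)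
  have h2 := le_add_inner_add_sq_of_convexOn_sq_sub (hdiff v).hasGradientAt hupper (v - q)
  rw [sub_right_comm, inner_sub_right, norm_sub_sq_real] at h1
  rw [sub_sub_cancel_left, inner_neg_right, norm_neg] at h2
  have hq : ⟪gradient f v, q⟫_ℝ - ⟪gradient f u, q⟫_ℝ - μ * ⟪v - u, q⟫_ℝ = (L - μ) * ‖q‖ ^ 2 := by
    rw [← real_inner_smul_left, ← inner_sub_left, ← inner_sub_left, hΔ, real_inner_smul_left,
      real_inner_self_eq_norm_sq]
  rw [hΔ, norm_smul, mul_pow, Real.norm_eq_abs, sq_abs]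
  nlinarith

theorem sq_norm_gradient_le_two_mul_sub (hL : 0 < L) (hdiff : Differentiable ℝ f)
    (hupper : ConvexOn ℝ Set.univ (fun y => L / 2 * ‖y‖ ^ 2 - f y))
    {fstar : ℝ} (hbdd : ∀ y, fstar ≤ f y) (u : E) :
    ‖gradient f u‖ ^ 2 ≤ 2 * L * (f u - fstar) := by
  have h := le_add_inner_add_sq_of_convexOn_sq_sub (hdiff u).hasGradientAt hupper
    (u - L⁻¹ • gradient f u)
  rw [sub_sub_cancel_left, inner_neg_right, norm_neg, real_inner_smul_right,
    real_inner_self_eq_norm_sq, norm_smul, mul_pow, Real.norm_eq_abs, sq_abs] at h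
  have hquad : -(L⁻¹ * ‖gradient f u‖ ^ 2) + L / 2 * (L⁻¹ ^ 2 * ‖gradient f u‖ ^ 2)
      = -(‖gradient f u‖ ^ 2 / (2 * L)) := by
    field_simp; ring
  have hfu := hbdd (u - L⁻¹ • gradient f u)
  rw [← div_le_iff₀' (by positivity)]
  linarith

theorem pcoef_mul_min_sq_norm_gradient_le {κ h : ℝ} (hL : 0 < L) (hμ : μ ≤ 0) (hκ : κ = μ / L)
    (hdiff : Differentiable ℝ f)
    (hupper : ConvexOn ℝ Set.univ (fun y => L / 2 * ‖y‖ ^ 2 - f y))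
    (hlower : ConvexOn ℝ Set.univ (fun y => f y - μ / 2 * ‖y‖ ^ 2))
    (h0 : 0 < h) (hh : h ≤ hbar κ) (u : E) :
    pcoef h κ * min (‖gradient f u‖ ^ 2) (‖gradient f (u - (h / L) • gradient f u)‖ ^ 2)
      ≤ 2 * L * (f u - f (u - (h / L) • gradient f u)) := by
  have hκ0 : κ ≤ 0 := hκ ▸ div_nonpos_of_nonpos_of_nonneg hμ hL.le
  have hμL : μ = κ * L := by rw [hκ, div_mul_cancel₀ _ hL.ne']
  set v := u - (h / L) • gradient f u
  set a := ‖gradient f u‖ ^ 2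
  set b := ‖gradient f v‖ ^ 2
  set s := ⟪gradient f v, gradient f u⟫_ℝ
  have hvu : v - u = -((h / L) • gradient f u) := by simp [v]
  have huv : u - v = (h / L) • gradient f u := by simp [v]
  have hΔ : gradient f v - gradient f u - μ • (v - u)
      = gradient f v - (1 - κ * h) • gradient f u := by
    rw [hvu, smul_neg, smul_smul, hμL]; field_simp; module
  have hΔ' : gradient f u - gradient f v - μ • (u - v)
      = -(gradient f v - (1 - κ * h) • gradient f u) := by
    rw [huv, smul_smul, hμL]; field_simp; module
  have hn : ‖gradient f v - (1 - κ * h) • gradient f u‖ ^ 2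
      = b - 2 * (1 - κ * h) * s + (1 - κ * h) ^ 2 * a := by
    rw [norm_sub_sq_real, real_inner_smul_right, norm_smul, Real.norm_eq_abs, mul_pow, sq_abs]
    ring
  have h1 := sq_norm_gradient_sub_sub_smul_le hdiff hupper hlower (by linarith) u v
  have h2 := sq_norm_gradient_sub_sub_smul_le hdiff hupper hlower (by linarith) v u
  rw [hΔ, hn, hvu, inner_neg_right, real_inner_smul_right, real_inner_self_eq_norm_sq, norm_neg,
    norm_smul, mul_pow, Real.norm_eq_abs, sq_abs] at h1
  rw [hΔ', norm_neg, hn, huv, real_inner_smul_right, norm_smul, mul_pow, Real.norm_eq_abs,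
    sq_abs] at h2
  have hs : 2 * s ≤ a + b := by
    nlinarith [norm_sub_sq_real (gradient f v) (gradient f u),
      sq_nonneg ‖gradient f v - gradient f u‖]
  refine pcoef_mul_min_le hκ0 h0 (quadratic_nonneg_of_le_hbar hκ0 h0 hh) hs ?_ ?_
  · convert h2 using 1; rw [hμL]; field_simp; ring
  · convert h1 using 1; rw [hμL]; field_simp; ring

end Gradient

theorem le_div_one_add_sum_of_descent {N : ℕ} {m : ℝ} {p F : ℕ → ℝ} (hp : ∀ i < N, 0 ≤ p i)
    (hstep : ∀ i < N, p i * m ≤ F i - F (i + 1)) (hlast : m ≤ F N) :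
    m ≤ F 0 / (1 + ∑ i ∈ Finset.range N, p i) := by
  have hsum : (∑ i ∈ Finset.range N, p i) * m ≤ F 0 - F N := by
    rw [Finset.sum_mul, ← Finset.sum_range_sub']
    exact Finset.sum_le_sum fun i hi => hstep i (Finset.mem_range.mp hi)
  have hpos : 0 ≤ ∑ i ∈ Finset.range N, p i :=
    Finset.sum_nonneg fun i hi => hp i (Finset.mem_range.mp hi)
  rw [le_div_iff₀ (by linarith)]
  linarith

theorem stmt_11 {d : ℕ} (f : EuclideanSpace ℝ (Fin d) → ℝ) (L μ κ : ℝ)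
    (hL : 0 < L) (hμ : μ ≤ 0) (hκ : κ = μ / L)
    (hdiff : Differentiable ℝ f)
    (hupper : ConvexOn ℝ Set.univ (fun y => L / 2 * ‖y‖ ^ 2 - f y))
    (hlower : ConvexOn ℝ Set.univ (fun y => f y - μ / 2 * ‖y‖ ^ 2))
    (fstar : ℝ) (hbdd : ∀ y, fstar ≤ f y)
    (N : ℕ)
    (h : ℕ → ℝ) (hh : ∀ i < N, h i ∈ Set.Ioc 0 (hbar κ))
    (x : ℕ → EuclideanSpace ℝ (Fin d))
    (hstep : ∀ i < N, x (i + 1) = x i - (h i / L) • gradient f (x i)) :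
    (Finset.range (N + 1)).inf' (by simp) (fun i => ‖gradient f (x i)‖ ^ 2) ≤
      2 * L * (f (x 0) - fstar) / (1 + ∑ i ∈ Finset.range N, pcoef (h i) κ) := by
  have hκ0 : κ ≤ 0 := hκ ▸ div_nonpos_of_nonpos_of_nonneg hμ hL.le
  have hmin : ∀ i ≤ N, (Finset.range (N + 1)).inf' (by simp) (fun i => ‖gradient f (x i)‖ ^ 2)
      ≤ ‖gradient f (x i)‖ ^ 2 :=
    fun i hi => Finset.inf'_le _ (Finset.mem_range.mpr (Nat.lt_succ_of_le hi))
  refine le_div_one_add_sum_of_descent (F := fun i => 2 * L * (f (x i) - fstar))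
    (fun i hi => pcoef_nonneg hκ0 (hh i hi).1 (hh i hi).2) (fun i hi => ?_)
    ((hmin N le_rfl).trans (sq_norm_gradient_le_two_mul_sub hL hdiff hupper hbdd (x N)))
  have hdesc := pcoef_mul_min_sq_norm_gradient_le hL hμ hκ hdiff hupper hlower (hh i hi).1
    (hh i hi).2 (x i)
  rw [← hstep i hi] at hdesc
  calc _ ≤ pcoef (h i) κ * min (‖gradient f (x i)‖ ^ 2) (‖gradient f (x (i + 1))‖ ^ 2) :=
        mul_le_mul_of_nonneg_left (le_min (hmin i hi.le) (hmin (i + 1) hi))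
          (pcoef_nonneg hκ0 (hh i hi).1 (hh i hi).2)
    _ ≤ _ := hdesc
    _ = _ := by ring
end

section
/- Let L > 0 and f ∈ F_{0,L}(ℝ^d) be smooth convex with global minimum f_*. Run N gradient steps x_{i+1} = x_i - (h_i/L)∇f(x_i) with h_i ∈ (0, 3/2]. Then ‖∇f(x_N)‖² ≤ L(f(x₀) - f_*)/(1/2 + ∑_{i=0}^{N-1} h_i). -/
/-!
Co-coercivity of `∇f`, `‖∇f x - ∇f y‖² ≤ L ⟪∇f x - ∇f y, x - y⟫`, controls one gradient step
`x' = x - (h/L) ∇f x` in two ways: for `h ≤ 2` the gradient norm does not increase, and for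
`h ≤ 3/2` the step decreases `f` by at least `(h/L) ‖∇f x'‖²`. Summing the decreases and using
monotonicity gives `(∑ hᵢ) ‖∇f x_N‖² ≤ L (f x₀ - f x_N)`, and one more step of length `1/L` from
`x_N` gives `‖∇f x_N‖² / 2 ≤ L (f x_N - f_*)`; adding the two yields the bound.
-/

open Set Finset
open scoped Gradient RealInnerProductSpace

section SmoothConvex

variable {E : Type*} [NormedAddCommGroup E] [InnerProductSpace ℝ E] [CompleteSpace E]

noncomputable def gradientStep (f : E → ℝ) (L h : ℝ) (x : E) : E :=
  x - (h / L) • ∇ f x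

variable {f : E → ℝ} {L : ℝ}

theorem hasDerivAt_comp_add_smul {x v : E} {t : ℝ} (hf : DifferentiableAt ℝ f (x + t • v)) :
    HasDerivAt (fun s : ℝ => f (x + s • v)) ⟪∇ f (x + t • v), v⟫ t := by
  have hline : HasDerivAt (fun s : ℝ => x + s • v) v t := by
    simpa using ((hasDerivAt_id t).smul_const v).const_add x
  simpa [InnerProductSpace.toDual_apply_apply, Function.comp_def] using
    hf.hasGradientAt.hasFDerivAt.comp_hasDerivAt t hline

theorem ConvexOn.add_inner_gradient_le (hconv : ConvexOn ℝ univ f) {x : E}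
    (hx : DifferentiableAt ℝ f x) (y : E) : f x + ⟪∇ f x, y - x⟫ ≤ f y := by
  have hline : ConvexOn ℝ univ (fun t : ℝ => f (x + t • (y - x))) := by
    have hcomp : (fun t : ℝ => f (x + t • (y - x))) = f ∘ AffineMap.lineMap x y := by
      ext t
      simp [AffineMap.lineMap_apply_module', add_comm]
    simpa [hcomp] using hconv.comp_affineMap (AffineMap.lineMap x y)
  have hderiv := hasDerivAt_comp_add_smul (v := y - x) (t := 0) (by simpa using hx)
  have hslope := hline.le_slope_of_hasDerivAt (mem_univ 0) (mem_univ 1) one_pos hderiv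
  simp only [slope_def_field, zero_smul, add_zero, one_smul, add_sub_cancel] at hslope
  linarith

theorem descent_lemma (hdiff : Differentiable ℝ f)
    (hlip : ∀ x y, ‖∇ f x - ∇ f y‖ ≤ L * ‖x - y‖) (x y : E) :
    f y ≤ f x + ⟪∇ f x, y - x⟫ + L / 2 * ‖y - x‖ ^ 2 := by
  set v := y - x
  let ψ : ℝ → ℝ := fun t => f (x + t • v) - t * ⟪∇ f x, v⟫ - L / 2 * t ^ 2 * ‖v‖ ^ 2
  have hψ : ∀ t, HasDerivAt ψ (⟪∇ f (x + t • v) - ∇ f x, v⟫ - L * t * ‖v‖ ^ 2) t := by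
    intro t
    have := ((hasDerivAt_comp_add_smul (x := x) (v := v) (hdiff _)).sub
      ((hasDerivAt_id t).mul_const ⟪∇ f x, v⟫)).sub
      (((hasDerivAt_pow 2 t).const_mul (L / 2)).mul_const (‖v‖ ^ 2))
    exact this.congr_deriv (by rw [inner_sub_left]; simp only [Nat.cast_ofNat]; ring)
  have hanti : AntitoneOn ψ (Icc 0 1) := by
    refine antitoneOn_of_deriv_nonpos (convex_Icc 0 1)
      (fun t _ => (hψ t).continuousAt.continuousWithinAt)
      (fun t _ => (hψ t).differentiableAt.differentiableWithinAt) fun t ht => ?_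
    rw [interior_Icc] at ht
    rw [(hψ t).deriv, sub_nonpos]
    calc ⟪∇ f (x + t • v) - ∇ f x, v⟫
        ≤ ‖∇ f (x + t • v) - ∇ f x‖ * ‖v‖ := real_inner_le_norm _ _
      _ ≤ L * ‖t • v‖ * ‖v‖ := by gcongr; simpa using hlip (x + t • v) x
      _ = L * t * ‖v‖ ^ 2 := by rw [norm_smul, Real.norm_of_nonneg ht.1.le]; ring
  have h01 := hanti (left_mem_Icc.2 zero_le_one) (right_mem_Icc.2 zero_le_one) zero_le_one
  simp only [ψ, zero_smul, add_zero, one_smul] at h01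
  rw [show x + v = y from add_sub_cancel x y] at h01
  linarith

theorem sq_norm_gradient_le_of_forall_le (hL : 0 < L) (hdiff : Differentiable ℝ f)
    (hlip : ∀ x y, ‖∇ f x - ∇ f y‖ ≤ L * ‖x - y‖) {fstar : ℝ} (hbdd : ∀ y, fstar ≤ f y)
    (x : E) : ‖∇ f x‖ ^ 2 ≤ 2 * L * (f x - fstar) := by
  have hdesc := descent_lemma hdiff hlip x (x - L⁻¹ • ∇ f x)
  rw [sub_sub_cancel_left, inner_neg_right, real_inner_smul_right, real_inner_self_eq_norm_sq,
    norm_neg, norm_smul, Real.norm_of_nonneg (inv_nonneg.2 hL.le)] at hdesc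
  have hhalf : L / 2 * (L⁻¹ * ‖∇ f x‖) ^ 2 = L⁻¹ * ‖∇ f x‖ ^ 2 / 2 := by
    field_simp
  have hgap : L⁻¹ * ‖∇ f x‖ ^ 2 ≤ 2 * (f x - fstar) := by
    linarith [hbdd (x - L⁻¹ • ∇ f x)]
  rw [inv_mul_le_iff₀ hL] at hgap
  linarith

theorem ConvexOn.add_inner_gradient_add_sq_norm_le (hconv : ConvexOn ℝ univ f) (hL : 0 < L)
    (hdiff : Differentiable ℝ f) (hlip : ∀ x y, ‖∇ f x - ∇ f y‖ ≤ L * ‖x - y‖) (x y : E) :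
    f x + ⟪∇ f x, y - x⟫ + 1 / (2 * L) * ‖∇ f y - ∇ f x‖ ^ 2 ≤ f y := by
  set w := ∇ f y - ∇ f x
  -- test both inequalities at the point reached from `y` by a gradient step on `f - ⟪∇f x, ·⟫`
  set z := y - L⁻¹ • w
  have hlow := hconv.add_inner_gradient_le (hdiff x) z
  have hup := descent_lemma hdiff hlip y z
  have hzy : z - y = -(L⁻¹ • w) := by simp [z]
  have hzx : z - x = (y - x) - L⁻¹ • w := by simp only [z]; abel
  rw [hzy, inner_neg_right, real_inner_smul_right, norm_neg, norm_smul,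
    Real.norm_of_nonneg (inv_nonneg.2 hL.le)] at hup
  rw [hzx, inner_sub_right, real_inner_smul_right] at hlow
  have hww : ⟪∇ f y, w⟫ - ⟪∇ f x, w⟫ = ‖w‖ ^ 2 := by
    rw [← inner_sub_left, real_inner_self_eq_norm_sq]
  field_simp at hup hlow ⊢
  nlinarith

theorem ConvexOn.sq_norm_gradient_sub_le_inner (hconv : ConvexOn ℝ univ f) (hL : 0 < L)
    (hdiff : Differentiable ℝ f) (hlip : ∀ x y, ‖∇ f x - ∇ f y‖ ≤ L * ‖x - y‖) (x y : E) :
    ‖∇ f x - ∇ f y‖ ^ 2 ≤ L * ⟪∇ f x - ∇ f y, x - y⟫ := by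
  have hxy := hconv.add_inner_gradient_add_sq_norm_le hL hdiff hlip x y
  have hyx := hconv.add_inner_gradient_add_sq_norm_le hL hdiff hlip y x
  rw [norm_sub_rev, ← neg_sub x y, inner_neg_right] at hxy
  have hsum : 2 * (1 / (2 * L) * ‖∇ f x - ∇ f y‖ ^ 2) ≤ ⟪∇ f x - ∇ f y, x - y⟫ := by
    rw [inner_sub_left]
    linarith
  calc ‖∇ f x - ∇ f y‖ ^ 2 = L * (2 * (1 / (2 * L) * ‖∇ f x - ∇ f y‖ ^ 2)) := by
        field_simp
    _ ≤ L * ⟪∇ f x - ∇ f y, x - y⟫ := by gcongr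

theorem sub_gradientStep (f : E → ℝ) (L h : ℝ) (x : E) :
    x - gradientStep f L h x = (h / L) • ∇ f x := by
  simp [gradientStep]

theorem ConvexOn.sq_norm_gradient_sub_gradientStep_le (hconv : ConvexOn ℝ univ f) (hL : 0 < L)
    (hdiff : Differentiable ℝ f) (hlip : ∀ x y, ‖∇ f x - ∇ f y‖ ≤ L * ‖x - y‖) (h : ℝ) (x : E) :
    ‖∇ f x - ∇ f (gradientStep f L h x)‖ ^ 2 ≤
      h * ⟪∇ f x, ∇ f x - ∇ f (gradientStep f L h x)⟫ := by
  have hcoco := hconv.sq_norm_gradient_sub_le_inner hL hdiff hlip x (gradientStep f L h x)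
  rwa [sub_gradientStep, real_inner_smul_right, ← mul_assoc, mul_div_cancel₀ _ hL.ne',
    real_inner_comm] at hcoco

theorem ConvexOn.norm_gradient_gradientStep_le (hconv : ConvexOn ℝ univ f) (hL : 0 < L)
    (hdiff : Differentiable ℝ f) (hlip : ∀ x y, ‖∇ f x - ∇ f y‖ ≤ L * ‖x - y‖) {h : ℝ}
    (h0 : 0 < h) (h2 : h ≤ 2) (x : E) :
    ‖∇ f (gradientStep f L h x)‖ ≤ ‖∇ f x‖ := by
  set x' := gradientStep f L h x
  set g := ∇ f x
  set r := g - ∇ f x'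
  have hcoco : ‖r‖ ^ 2 ≤ h * ⟪g, r⟫ := hconv.sq_norm_gradient_sub_gradientStep_le hL hdiff hlip h x
  have hexpand : ‖∇ f x'‖ ^ 2 = ‖g‖ ^ 2 - 2 * ⟪g, r⟫ + ‖r‖ ^ 2 := by
    rw [← norm_sub_sq_real, sub_sub_cancel]
  -- `h (‖∇f x'‖² - ‖g‖²) = h ‖r‖² - 2 h ⟪g, r⟫ ≤ (h - 2) ‖r‖² ≤ 0`
  have hsq : ‖∇ f x'‖ ^ 2 ≤ ‖g‖ ^ 2 := by
    nlinarith [mul_nonneg (sub_nonneg.2 h2) (sq_nonneg ‖r‖)]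
  exact (pow_le_pow_iff_left₀ (norm_nonneg _) (norm_nonneg _) two_ne_zero).1 hsq

theorem ConvexOn.mul_sq_norm_gradient_gradientStep_le (hconv : ConvexOn ℝ univ f) (hL : 0 < L)
    (hdiff : Differentiable ℝ f) (hlip : ∀ x y, ‖∇ f x - ∇ f y‖ ≤ L * ‖x - y‖) {h : ℝ}
    (h32 : h ≤ 3 / 2) (x : E) :
    h * ‖∇ f (gradientStep f L h x)‖ ^ 2 ≤ L * (f x - f (gradientStep f L h x)) := by
  set x' := gradientStep f L h x
  set g := ∇ f x
  set r := g - ∇ f x'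
  have hcoco : ‖r‖ ^ 2 ≤ h * ⟪g, r⟫ := hconv.sq_norm_gradient_sub_gradientStep_le hL hdiff hlip h x
  have hinterp := hconv.add_inner_gradient_add_sq_norm_le hL hdiff hlip x' x
  rw [sub_gradientStep, real_inner_smul_right] at hinterp
  have hexpand : ‖∇ f x'‖ ^ 2 = ‖g‖ ^ 2 - 2 * ⟪g, r⟫ + ‖r‖ ^ 2 := by
    rw [← norm_sub_sq_real, sub_sub_cancel]
  have hcross : ⟪∇ f x', g⟫ = ‖g‖ ^ 2 - ⟪g, r⟫ := by
    rw [show ∇ f x' = g - r by simp [r], inner_sub_left, real_inner_self_eq_norm_sq,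
      real_inner_comm]
  field_simp at hinterp
  -- `L (f x - f x') - h ‖∇f x'‖² ≥ h ⟪g, r⟫ + ‖r‖² / 2 - h ‖r‖² ≥ (3/2 - h) ‖r‖²`
  nlinarith [mul_nonneg (sub_nonneg.2 h32) (sq_nonneg ‖r‖)]

end SmoothConvex

theorem le_div_half_add_sum_of_descent {N : ℕ} {a F h : ℕ → ℝ} {L c : ℝ}
    (hh : ∀ i < N, 0 ≤ h i) (hanti : ∀ i < N, a (i + 1) ≤ a i)
    (hdesc : ∀ i < N, h i * a (i + 1) ≤ L * (F i - F (i + 1)))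
    (hlast : a N ≤ 2 * L * (F N - c)) :
    a N ≤ L * (F 0 - c) / (1 / 2 + ∑ i ∈ range N, h i) := by
  have hmono : ∀ i ≤ N, a N ≤ a i := fun i hi =>
    Nat.decreasingInduction (motive := fun i _ => a N ≤ a i)
      (fun k hk ih => ih.trans (hanti k hk)) le_rfl hi
  have hsum : (∑ i ∈ range N, h i) * a N ≤ L * (F 0 - F N) :=
    calc (∑ i ∈ range N, h i) * a N = ∑ i ∈ range N, h i * a N := sum_mul _ _ _
      _ ≤ ∑ i ∈ range N, L * (F i - F (i + 1)) := by
        refine sum_le_sum fun i hi => ?_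
        have hi := mem_range.1 hi
        exact (mul_le_mul_of_nonneg_left (hmono (i + 1) hi) (hh i hi)).trans (hdesc i hi)
      _ = L * (F 0 - F N) := by rw [← mul_sum, sum_range_sub']
  have hpos : 0 < 1 / 2 + ∑ i ∈ range N, h i :=
    add_pos_of_pos_of_nonneg one_half_pos (sum_nonneg fun i hi => hh i (mem_range.1 hi))
  rw [le_div_iff₀ hpos]
  linarith

theorem stmt_16_general {d : ℕ} (f : EuclideanSpace ℝ (Fin d) → ℝ) (L : ℝ) (hL : 0 < L)
    (hdiff : Differentiable ℝ f)
    (hconv : ConvexOn ℝ Set.univ f)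
    (hlip : ∀ x y, ‖gradient f x - gradient f y‖ ≤ L * ‖x - y‖)
    (fstar : ℝ) (hbdd : ∀ y, fstar ≤ f y)
    (N : ℕ)
    (h : ℕ → ℝ) (hh : ∀ i < N, h i ∈ Set.Ioc (0:ℝ) (3 / 2))
    (x : ℕ → EuclideanSpace ℝ (Fin d))
    (hstep : ∀ i < N, x (i + 1) = x i - (h i / L) • gradient f (x i)) :
    ‖gradient f (x N)‖ ^ 2 ≤
      L * (f (x 0) - fstar) / (1 / 2 + ∑ i ∈ Finset.range N, h i) := by
  refine le_div_half_add_sum_of_descent (a := fun i => ‖∇ f (x i)‖ ^ 2) (F := fun i => f (x i))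
    (fun i hi => (hh i hi).1.le) (fun i hi => ?_) (fun i hi => ?_)
    (sq_norm_gradient_le_of_forall_le hL hdiff hlip hbdd (x N))
  · rw [hstep i hi]
    exact pow_le_pow_left₀ (norm_nonneg _) (hconv.norm_gradient_gradientStep_le hL hdiff hlip
      (hh i hi).1 ((hh i hi).2.trans (by norm_num)) (x i)) 2
  · rw [hstep i hi]
    exact hconv.mul_sq_norm_gradient_gradientStep_le hL hdiff hlip (hh i hi).2 (x i)

theorem stmt_16 {d : ℕ} (f : EuclideanSpace ℝ (Fin d) → ℝ) (L : ℝ) (hL : 0 < L)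
    (hdiff : Differentiable ℝ f)
    (hconv : ConvexOn ℝ Set.univ f)
    (hlip : ∀ x y, ‖gradient f x - gradient f y‖ ≤ L * ‖x - y‖)
    (fstar : ℝ) (hbdd : ∀ y, fstar ≤ f y)
    (N : ℕ) (hN : 1 ≤ N)
    (h : ℕ → ℝ) (hh : ∀ i < N, h i ∈ Set.Ioc (0:ℝ) (3 / 2))
    (x : ℕ → EuclideanSpace ℝ (Fin d))
    (hstep : ∀ i < N, x (i + 1) = x i - (h i / L) • gradient f (x i)) :
    ‖gradient f (x N)‖ ^ 2 ≤
      L * (f (x 0) - fstar) / (1 / 2 + ∑ i ∈ Finset.range N, h i) :=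
  stmt_16_general f L hL hdiff hconv hlip fstar hbdd N h hh x hstep
end

section
/- Let L > 0, N ≥ 1, h_i ∈ (0, 3/2], set U = √(L·Δ / ∑_{i=0}^{N-1} h_i) with Δ > 0, x_i = (U/L)∑_{j=i}^{N-1} h_j, f_i = Δ - (U²/(2L))∑_{j=0}^{i-1} h_j·2 (i.e., linear decrements). Define f : ℝ → ℝ by f(x) = (L/2)(x+U/L)² - U²/(2L) for x ≤ x_N, f(x) = U(x - x_{i+1}) + f_{i+1} for x ∈ [x_{i+1}, x_i], and f(x) = (L/2)(x-x₀)² + U(x - x₀) + f₀ for x ≥ x₀. Then f is convex with L-Lipschitz derivative, satisfies the gradient iteration with the given steps, and achieves ‖f'(x_N)‖² = L(f(x₀)-f(x_N))/∑ h_i, proving tightness of the convex rate. -/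
/-!
The worst case is `f s = U s + (L / 2) dist(s, [0, x₀])²` with `x_N = 0`. Its derivative is
`U + L e(s)`, where `e(s)` is the signed distance from `s` to `[0, x₀]`; `e` is monotone and
1-Lipschitz, so `f` is convex and `L`-smooth. On `[0, x₀]` the slope is `U`, so a step of length
`h_i / L` moves `x_i` by exactly `h_i U / L`, and `f x₀ - f x_N = U x₀ = U² ∑ h_i / L`.
-/

open Finset

theorem hasDerivAt_max_zero_sq (t : ℝ) :
    HasDerivAt (fun s : ℝ => max s 0 ^ 2) (2 * max t 0) t := by
  rcases lt_trichotomy t 0 with ht | rfl | ht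
  · have hzero : (fun s : ℝ => max s 0 ^ 2) =ᶠ[nhds t] fun _ => 0 := by
      filter_upwards [Iio_mem_nhds ht] with s hs
      simp [max_eq_right (Set.mem_Iio.mp hs).le]
    simpa [max_eq_right ht.le] using (hasDerivAt_const t (0 : ℝ)).congr_of_eventuallyEq hzero
  · have hleft : HasDerivWithinAt (fun s : ℝ => max s 0 ^ 2) 0 (Set.Iic 0) 0 :=
      (hasDerivWithinAt_const 0 _ 0).congr
        (fun s hs => by simp [max_eq_right (Set.mem_Iic.mp hs)]) (by simp)
    have hright : HasDerivWithinAt (fun s : ℝ => max s 0 ^ 2) 0 (Set.Ici 0) 0 := by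
      simpa using ((hasDerivAt_pow 2 (0 : ℝ)).hasDerivWithinAt).congr
        (fun s hs => by simp [max_eq_left (Set.mem_Ici.mp hs)]) (by simp)
    simpa [Set.Iic_union_Ici, hasDerivWithinAt_univ] using hleft.union hright
  · have hsq : (fun s : ℝ => max s 0 ^ 2) =ᶠ[nhds t] fun s => s ^ 2 := by
      filter_upwards [Ioi_mem_nhds ht] with s hs
      simp [max_eq_left (Set.mem_Ioi.mp hs).le]
    simpa [max_eq_left ht.le] using (hasDerivAt_pow 2 t).congr_of_eventuallyEq hsq

theorem hasDerivAt_min_zero_sq (t : ℝ) :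
    HasDerivAt (fun s : ℝ => min s 0 ^ 2) (2 * min t 0) t := by
  have hmin : ∀ s : ℝ, min s 0 = -max (-s) 0 := fun s => by
    rw [← neg_zero, max_neg_neg, neg_neg, neg_zero]
  simp only [hmin, neg_sq]
  simpa [Function.comp_def] using (hasDerivAt_max_zero_sq (-t)).comp t (hasDerivAt_neg t)

/-- The signed distance from `s` to the interval `[0, a]` (for `0 ≤ a`). -/
def overshoot (a s : ℝ) : ℝ := min s 0 + max (s - a) 0

theorem overshoot_eq_zero {a s : ℝ} (hs : s ∈ Set.Icc 0 a) : overshoot a s = 0 := by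
  simp [overshoot, hs.1, hs.2]

theorem monotone_overshoot (a : ℝ) : Monotone (overshoot a) := fun y z hyz => by
  unfold overshoot
  gcongr

theorem abs_overshoot_sub_le {a : ℝ} (ha : 0 ≤ a) (y z : ℝ) :
    |overshoot a y - overshoot a z| ≤ |y - z| := by
  simp only [overshoot, min_def, max_def]
  split_ifs <;>
    (rcases abs_cases (y - z) with ⟨hd, hd'⟩ | ⟨hd, hd'⟩ <;> rw [hd, abs_le] <;>
      constructor <;> linarith)

noncomputable def worstCase (U L a s : ℝ) : ℝ :=
  U * s + L / 2 * (min s 0 ^ 2 + max (s - a) 0 ^ 2)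

section worstCase

variable (U L a : ℝ)

theorem hasDerivAt_worstCase (s : ℝ) :
    HasDerivAt (worstCase U L a) (U + L * overshoot a s) s := by
  have hmax : HasDerivAt (fun s : ℝ => max (s - a) 0 ^ 2) (2 * max (s - a) 0) s := by
    simpa [Function.comp_def] using
      (hasDerivAt_max_zero_sq (s - a)).comp s ((hasDerivAt_id s).sub_const a)
  refine (((hasDerivAt_id s).const_mul U).add
    (((hasDerivAt_min_zero_sq s).add hmax).const_mul (L / 2))).congr_deriv ?_
  simp only [overshoot]
  ring

theorem differentiable_worstCase : Differentiable ℝ (worstCase U L a) :=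
  fun s => (hasDerivAt_worstCase U L a s).differentiableAt

theorem deriv_worstCase : deriv (worstCase U L a) = fun s => U + L * overshoot a s :=
  funext fun s => (hasDerivAt_worstCase U L a s).deriv

variable {U L a}

theorem convexOn_worstCase (hL : 0 ≤ L) : ConvexOn ℝ Set.univ (worstCase U L a) := by
  refine Monotone.convexOn_univ_of_deriv (differentiable_worstCase U L a) ?_
  rw [deriv_worstCase]
  exact monotone_const.add ((monotone_overshoot a).const_mul hL)

theorem abs_deriv_worstCase_sub_le (hL : 0 ≤ L) (ha : 0 ≤ a) (y z : ℝ) :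
    |deriv (worstCase U L a) y - deriv (worstCase U L a) z| ≤ L * |y - z| := by
  rw [deriv_worstCase, add_sub_add_left_eq_sub, ← mul_sub, abs_mul, abs_of_nonneg hL]
  exact mul_le_mul_of_nonneg_left (abs_overshoot_sub_le ha y z) hL

theorem worstCase_of_nonpos (ha : 0 ≤ a) {s : ℝ} (hs : s ≤ 0) :
    worstCase U L a s = U * s + L / 2 * s ^ 2 := by
  simp [worstCase, hs, show s - a ≤ 0 by linarith]

theorem worstCase_of_mem_Icc {s : ℝ} (hs : s ∈ Set.Icc 0 a) : worstCase U L a s = U * s := by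
  simp [worstCase, hs.1, hs.2]

theorem worstCase_of_le (ha : 0 ≤ a) {s : ℝ} (hs : a ≤ s) :
    worstCase U L a s = L / 2 * (s - a) ^ 2 + U * s := by
  simp [worstCase, show 0 ≤ s by linarith, hs]
  ring

theorem deriv_worstCase_of_mem_Icc {s : ℝ} (hs : s ∈ Set.Icc 0 a) :
    deriv (worstCase U L a) s = U := by
  simp [deriv_worstCase, overshoot_eq_zero hs]

end worstCase

theorem sum_Ico_mem_Icc_sum_range {h : ℕ → ℝ} {N : ℕ} (hh : ∀ i < N, 0 ≤ h i) (i : ℕ) :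
    ∑ j ∈ Ico i N, h j ∈ Set.Icc 0 (∑ j ∈ range N, h j) :=
  ⟨sum_nonneg fun j hj => hh j (mem_Ico.mp hj).2,
    sum_le_sum_of_subset_of_nonneg (fun _ hj => mem_range.mpr (mem_Ico.mp hj).2)
      fun j hj _ => hh j (mem_range.mp hj)⟩

theorem sub_mul_sum_range_eq_mul_sum_Ico {L Δ U : ℝ} (hL : L ≠ 0) (h : ℕ → ℝ) {k N : ℕ}
    (hk : k ≤ N) (hUS : U ^ 2 * ∑ i ∈ range N, h i = L * Δ) :
    Δ - U ^ 2 / (2 * L) * ∑ j ∈ range k, h j * 2 = U * (U / L * ∑ j ∈ Ico k N, h j) := by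
  rw [← sum_range_add_sum_Ico h hk] at hUS
  rw [← sum_mul]
  field_simp
  linear_combination -hUS

theorem stmt_17 (L Δ : ℝ) (N : ℕ) (h : ℕ → ℝ)
    (hL : 0 < L) (hΔ : 0 < Δ) (hN : 1 ≤ N)
    (hh : ∀ i < N, h i ∈ Set.Ioc (0:ℝ) (3 / 2))
    (U : ℝ)
    (hU : U = Real.sqrt (L * Δ / ∑ i ∈ Finset.range N, h i))
    (xseq fval : ℕ → ℝ)
    (hx : ∀ i, xseq i = (U / L) * ∑ j ∈ Finset.Ico i N, h j)
    (hfv : ∀ i, fval i = Δ - (U ^ 2 / (2 * L)) *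
      ∑ j ∈ Finset.range i, h j * 2) :
    ∃ f : ℝ → ℝ,
      (∀ y : ℝ, y ≤ xseq N →
        f y = L / 2 * (y + U / L) ^ 2 - U ^ 2 / (2 * L)) ∧
      (∀ i < N, ∀ y ∈ Set.Icc (xseq (i + 1)) (xseq i),
        f y = U * (y - xseq (i + 1)) + fval (i + 1)) ∧
      (∀ y : ℝ, xseq 0 ≤ y →
        f y = L / 2 * (y - xseq 0) ^ 2 + U * (y - xseq 0) + fval 0) ∧
      ConvexOn ℝ Set.univ f ∧
      Differentiable ℝ f ∧
      (∀ y z : ℝ, |deriv f y - deriv f z| ≤ L * |y - z|) ∧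
      (∀ i < N, xseq (i + 1) = xseq i - (h i / L) * deriv f (xseq i)) ∧
      (deriv f (xseq N)) ^ 2 =
        L * (f (xseq 0) - f (xseq N)) / ∑ i ∈ Finset.range N, h i := by
  set S := ∑ i ∈ range N, h i
  have hS : 0 < S := sum_pos (fun i hi => (hh i (mem_range.mp hi)).1) ⟨0, mem_range.mpr hN⟩
  have hUS : U ^ 2 * S = L * Δ := by
    rw [hU, Real.sq_sqrt (by positivity), div_mul_cancel₀ _ hS.ne']
  have hx_mem : ∀ i, xseq i ∈ Set.Icc 0 (xseq 0) := fun i => by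
    have hUL : 0 ≤ U / L := div_nonneg (hU ▸ Real.sqrt_nonneg _) hL.le
    obtain ⟨hlo, hhi⟩ := sum_Ico_mem_Icc_sum_range (fun j hj => (hh j hj).1.le) i
    rw [hx 0, hx i, ← range_eq_Ico]
    exact ⟨mul_nonneg hUL hlo, mul_le_mul_of_nonneg_left hhi hUL⟩
  have hxN : xseq N = 0 := by simp [hx]
  have hfval : ∀ k ≤ N, fval k = U * xseq k := fun k hk => by
    rw [hfv, hx, sub_mul_sum_range_eq_mul_sum_Ico hL.ne' h hk hUS]
  refine ⟨worstCase U L (xseq 0), fun y hy => ?_, fun i hi y hy => ?_, fun y hy => ?_,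
    convexOn_worstCase hL.le, differentiable_worstCase _ _ _,
    abs_deriv_worstCase_sub_le hL.le (hx_mem 0).1, fun i hi => ?_, ?_⟩
  · rw [worstCase_of_nonpos (hx_mem 0).1 (hxN ▸ hy)]
    field_simp
    ring
  · have hy' : y ∈ Set.Icc 0 (xseq 0) := ⟨(hx_mem _).1.trans hy.1, hy.2.trans (hx_mem i).2⟩
    rw [worstCase_of_mem_Icc hy', hfval _ hi]
    ring
  · rw [worstCase_of_le (hx_mem 0).1 hy, hfval 0 N.zero_le]
    ring
  · rw [deriv_worstCase_of_mem_Icc (hx_mem i), hx, hx, sum_eq_sum_Ico_succ_bot hi]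
    field_simp
    ring
  · rw [deriv_worstCase_of_mem_Icc (hx_mem N), worstCase_of_mem_Icc (hx_mem 0),
      worstCase_of_mem_Icc (hx_mem N), hxN, hx 0, ← range_eq_Ico]
    field_simp
    ring
end
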